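/- Monotonicity of information centrality under edge removal: if S ⊊ H ⊆ E are edge sets such that G∖H is connected, then the information centrality of any vertex v in G∖H is strictly smaller than in G∖S, i.e., I_v(H) < I_v(S). -/

import Mathlib

open Matrix Finset
open scoped Classical

/-- The four Penrose identities: `B` is the Moore–Penrose pseudoinverse of `A`. -/
def IsMoorePenrose {m : Type*} [Fintype m] [DecidableEq m]
    (A B : Matrix m m ℝ) : Prop :=
  A * B * A = A ∧ B * A * B = B ∧ (A * B)ᵀ = A * B ∧ (B * A)ᵀ = B * A

/-- The Moore–Penrose pseudoinverse (chosen when it exists, `0` otherwise). -/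
noncomputable def pinv {m : Type*} [Fintype m] [DecidableEq m]
    (A : Matrix m m ℝ) : Matrix m m ℝ :=
  if h : ∃ B, IsMoorePenrose A B then h.choose else 0

/-- Signed incidence vector `b_{xy} = e_x - e_y`. -/
def incVec {n : ℕ} (x y : Fin n) : Fin n → ℝ :=
  fun i => (if i = x then 1 else 0) - (if i = y then 1 else 0)

/-- Effective resistance between `x` and `y` in `G`. -/
noncomputable def effRes {n : ℕ} (G : SimpleGraph (Fin n)) (x y : Fin n) : ℝ :=
  incVec x y ⬝ᵥ (pinv (G.lapMatrix ℝ)).mulVec (incVec x y)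

/-- Resistance distance of `v`: sum of effective resistances to all other vertices. -/
noncomputable def resDist {n : ℕ} (G : SimpleGraph (Fin n)) (v : Fin n) : ℝ :=
  ∑ u ∈ Finset.univ.erase v, effRes G u v

/-- Information centrality of `v`. -/
noncomputable def infoCent {n : ℕ} (G : SimpleGraph (Fin n)) (v : Fin n) : ℝ :=
  (n : ℝ) / resDist G v

/-!
Write `R(u, v) = φᵀ L φ` with `φ = L⁺ (e_u - e_v)` the potential, which solves `L φ = e_u - e_v`
when the graph is connected. If `G₂ ≤ G₁` and `ab` is an edge of `G₁` but not of `G₂`, expanding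
`0 ≤ (φ₂ - φ₁)ᵀ L₂ (φ₂ - φ₁)` and using `φ₁ᵀ L₂ φ₁ ≤ φ₁ᵀ L₁ φ₁ - (φ₁ a - φ₁ b)²` gives
`R₂(u, v) ≥ R₁(u, v) + (φ₁ a - φ₁ b)²`. As a function of `u` the drop `φ₁ a - φ₁ b` vanishes at
`u = v` and, by linearity in `u`, its values at `u = a` and `u = b` differ by `R₁(a, b) > 0`; so it
is nonzero at some `u ≠ v`, and `R_v = ∑ R(u, v)` strictly increases, i.e. `I_v = n / R_v` drops.
-/

section MoorePenrose

variable {m : Type*} [Fintype m] [DecidableEq m]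

lemma isMoorePenrose_cfc (A : Matrix m m ℝ) {f g : ℝ → ℝ} (hfgf : ∀ x, f x * g x * f x = f x)
    (hgfg : ∀ x, g x * f x * g x = g x) : IsMoorePenrose (cfc f A) (cfc g A) := by
  have hmul (f g : ℝ → ℝ) : cfc f A * cfc g A = cfc (fun x => f x * g x) A :=
    (cfc_mul f g A ((finite_spectrum A).continuousOn f) ((finite_spectrum A).continuousOn g)).symm
  have hsymm (f : ℝ → ℝ) : (cfc f A)ᵀ = cfc f A := by
    rw [← conjTranspose_eq_transpose_of_trivial, ← star_eq_conjTranspose]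
    exact (cfc_predicate f A).star_eq
  refine ⟨?_, ?_, ?_, ?_⟩
  · simp only [hmul, hfgf]
  · simp only [hmul, hgfg]
  all_goals rw [hmul, hsymm]

lemma isMoorePenrose_pinv {A : Matrix m m ℝ} (hA : A.IsSymm) : IsMoorePenrose A (pinv A) := by
  have hA' : IsSelfAdjoint A := by
    rwa [IsSelfAdjoint, star_eq_conjTranspose, conjTranspose_eq_transpose_of_trivial]
  -- `0⁻¹ = 0` is what makes `x ↦ x⁻¹` a pseudoinverse on the kernel too.
  have h : IsMoorePenrose A (cfc (fun x : ℝ => x⁻¹) A) := by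
    simpa only [cfc_id' ℝ A] using isMoorePenrose_cfc A (f := fun x => x) mul_inv_mul_cancel
      (fun x => by simpa using mul_inv_mul_cancel x⁻¹)
  rw [pinv, dif_pos ⟨_, h⟩]
  exact Exists.choose_spec (p := IsMoorePenrose A) ⟨_, h⟩

end MoorePenrose

lemma Matrix.IsSymm.dotProduct_mulVec_comm {m R : Type*} [Fintype m] [CommSemiring R]
    {M : Matrix m m R} (hM : M.IsSymm) (x y : m → R) : x ⬝ᵥ (M *ᵥ y) = y ⬝ᵥ (M *ᵥ x) := by
  rw [dotProduct_mulVec, ← mulVec_transpose, hM.eq, dotProduct_comm]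

namespace SimpleGraph

variable {V : Type*} [Fintype V] [DecidableEq V]

lemma sum_lapMatrix_mulVec (G : SimpleGraph V) [DecidableRel G.Adj] (x : V → ℝ) :
    ∑ i, (G.lapMatrix ℝ *ᵥ x) i = 0 := by
  have h := (G.isSymm_lapMatrix ℝ).dotProduct_mulVec_comm (fun _ => 1) x
  rw [lapMatrix_mulVec_const_eq_zero, dotProduct_zero] at h
  simpa [dotProduct] using h

lemma dotProduct_lapMatrix_mulVec_self_nonneg (G : SimpleGraph V) [DecidableRel G.Adj]
    (x : V → ℝ) : 0 ≤ x ⬝ᵥ (G.lapMatrix ℝ *ᵥ x) := by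
  simpa using (G.posSemidef_lapMatrix ℝ).dotProduct_mulVec_nonneg x

lemma eq_zero_of_dotProduct_lapMatrix_mulVec_self_eq_zero {G : SimpleGraph V} [DecidableRel G.Adj]
    (hG : G.Connected) {w : V → ℝ} (hw : w ⬝ᵥ (G.lapMatrix ℝ *ᵥ w) = 0) (hsum : ∑ i, w i = 0) :
    w = 0 := by
  rw [← toLinearMap₂'_apply', lapMatrix_toLinearMap₂'_apply'_eq_zero_iff_forall_reachable] at hw
  funext i
  have hconst : ∑ j, w j = Fintype.card V * w i := by
    rw [Finset.sum_congr rfl fun j _ => hw j i (hG.preconnected j i)]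
    simp
  have hcard : (Fintype.card V : ℝ) ≠ 0 := by
    have := hG.nonempty
    positivity
  simpa [hsum, hcard] using hconst

lemma lapMatrix_mulVec_pinv_mulVec {G : SimpleGraph V} [DecidableRel G.Adj] (hG : G.Connected)
    {b : V → ℝ} (hb : ∑ i, b i = 0) : G.lapMatrix ℝ *ᵥ (pinv (G.lapMatrix ℝ) *ᵥ b) = b := by
  set L := G.lapMatrix ℝ
  obtain ⟨hLBL, -, hLB, -⟩ := isMoorePenrose_pinv (G.isSymm_lapMatrix (R := ℝ))
  set w := b - L *ᵥ (pinv L *ᵥ b)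
  have horth (x : V → ℝ) : w ⬝ᵥ (L *ᵥ x) = 0 := by
    have hproj : (L * pinv L) *ᵥ b ⬝ᵥ L *ᵥ x = b ⬝ᵥ L *ᵥ x := by
      rw [dotProduct_comm, IsSymm.dotProduct_mulVec_comm hLB, mulVec_mulVec, hLBL]
    rw [sub_dotProduct, mulVec_mulVec, hproj, sub_self]
  have hw : w = 0 := by
    refine eq_zero_of_dotProduct_lapMatrix_mulVec_self_eq_zero hG (horth w) ?_
    simp only [w, L, Pi.sub_apply, Finset.sum_sub_distrib, hb, sum_lapMatrix_mulVec, sub_zero]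
  exact (sub_eq_zero.mp hw).symm

lemma dotProduct_lapMatrix_mulVec_add_sq_le {G₁ G₂ : SimpleGraph V} [DecidableRel G₁.Adj]
    [DecidableRel G₂.Adj] (h : G₂ ≤ G₁) {a b : V} (h₁ : G₁.Adj a b) (h₂ : ¬ G₂.Adj a b)
    (x : V → ℝ) :
    x ⬝ᵥ (G₂.lapMatrix ℝ *ᵥ x) + (x a - x b) ^ 2 ≤ x ⬝ᵥ (G₁.lapMatrix ℝ *ᵥ x) := by
  let energy (G : SimpleGraph V) [DecidableRel G.Adj] (i j : V) : ℝ :=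
    if G.Adj i j then (x i - x j) ^ 2 else 0
  let d (i j : V) : ℝ := energy G₁ i j - energy G₂ i j
  have hd_nonneg (i j : V) : 0 ≤ d i j := by
    by_cases h₂ij : G₂.Adj i j
    · simp [d, energy, h₂ij, h h₂ij]
    · by_cases h₁ij : G₁.Adj i j <;> simp [d, energy, h₁ij, h₂ij, sq_nonneg]
  have hd_ab : d a b + d b a = 2 * (x a - x b) ^ 2 := by
    simp only [d, energy, if_pos h₁, if_pos h₁.symm, if_neg h₂, if_neg (mt G₂.adj_symm h₂)]
    ring
  have hd_sum : d a b + d b a ≤ ∑ i, ∑ j, d i j := by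
    rw [← Fintype.sum_prod_type', ← Finset.sum_pair (f := fun p : V × V => d p.1 p.2)
      (by simp [h₁.ne] : (a, b) ≠ (b, a))]
    exact Finset.sum_le_univ_sum_of_nonneg fun p => hd_nonneg p.1 p.2
  simp only [← toLinearMap₂'_apply', lapMatrix_toLinearMap₂']
  simp only [d, Finset.sum_sub_distrib] at hd_sum
  linarith

end SimpleGraph

section Resistance

variable {n : ℕ} {G G₁ G₂ : SimpleGraph (Fin n)}

lemma incVec_dotProduct (x y : Fin n) (w : Fin n → ℝ) : incVec x y ⬝ᵥ w = w x - w y := by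
  simp [incVec, dotProduct, sub_mul, Finset.sum_sub_distrib]

lemma sum_incVec (x y : Fin n) : ∑ i, incVec x y i = 0 := by
  simp [incVec, Finset.sum_sub_distrib]

lemma incVec_sub_incVec (x y z : Fin n) : incVec x z - incVec y z = incVec x y := by
  funext i
  simp [incVec]

lemma incVec_self (x : Fin n) : incVec x x = 0 := by
  funext i
  simp [incVec]

/-- The vertex potentials when a unit current enters at `x` and leaves at `y`. -/
noncomputable def potential (G : SimpleGraph (Fin n)) (x y : Fin n) : Fin n → ℝ :=
  pinv (G.lapMatrix ℝ) *ᵥ incVec x y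

lemma effRes_eq_incVec_dotProduct_potential (G : SimpleGraph (Fin n)) (x y : Fin n) :
    effRes G x y = incVec x y ⬝ᵥ potential G x y :=
  rfl

lemma potential_sub_potential (G : SimpleGraph (Fin n)) (x y z : Fin n) :
    potential G x z - potential G y z = potential G x y := by
  rw [potential, potential, potential, ← mulVec_sub, incVec_sub_incVec]

lemma potential_self (G : SimpleGraph (Fin n)) (x : Fin n) : potential G x x = 0 := by
  rw [potential, incVec_self, mulVec_zero]

lemma lapMatrix_mulVec_potential (hG : G.Connected) (x y : Fin n) :
    G.lapMatrix ℝ *ᵥ potential G x y = incVec x y :=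
  G.lapMatrix_mulVec_pinv_mulVec hG (sum_incVec x y)

lemma effRes_eq_dotProduct_lapMatrix_mulVec (hG : G.Connected) (x y : Fin n) :
    effRes G x y = potential G x y ⬝ᵥ (G.lapMatrix ℝ *ᵥ potential G x y) := by
  rw [lapMatrix_mulVec_potential hG, dotProduct_comm, effRes_eq_incVec_dotProduct_potential]

lemma effRes_pos (hG : G.Connected) {x y : Fin n} (hxy : x ≠ y) : 0 < effRes G x y := by
  rw [effRes_eq_dotProduct_lapMatrix_mulVec hG]
  refine (G.dotProduct_lapMatrix_mulVec_self_nonneg _).lt_of_ne fun h => ?_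
  have h0 := ((G.posSemidef_lapMatrix ℝ).dotProduct_mulVec_zero_iff _).mp (by simpa using h.symm)
  rw [lapMatrix_mulVec_potential hG] at h0
  simpa [incVec, hxy] using congrFun h0 x

/-- A strict form of Rayleigh monotonicity. -/
lemma effRes_add_sq_le_effRes_of_le (h : G₂ ≤ G₁) (hG₂ : G₂.Connected) {a b : Fin n}
    (h₁ : G₁.Adj a b) (h₂ : ¬ G₂.Adj a b) (u v : Fin n) :
    effRes G₁ u v + (incVec a b ⬝ᵥ potential G₁ u v) ^ 2 ≤ effRes G₂ u v := by
  have hG₁ : G₁.Connected := hG₂.mono h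
  set φ₁ := potential G₁ u v
  set φ₂ := potential G₂ u v
  have hcross : φ₁ ⬝ᵥ (G₂.lapMatrix ℝ *ᵥ φ₂) = effRes G₁ u v := by
    rw [lapMatrix_mulVec_potential hG₂, dotProduct_comm, effRes_eq_incVec_dotProduct_potential]
  have hdiff := G₂.dotProduct_lapMatrix_mulVec_self_nonneg (φ₂ - φ₁)
  rw [mulVec_sub, dotProduct_sub, sub_dotProduct, sub_dotProduct,
    (G₂.isSymm_lapMatrix ℝ).dotProduct_mulVec_comm φ₂ φ₁, hcross,
    ← effRes_eq_dotProduct_lapMatrix_mulVec hG₂] at hdiff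
  have hdelete := SimpleGraph.dotProduct_lapMatrix_mulVec_add_sq_le h h₁ h₂ φ₁
  rw [← effRes_eq_dotProduct_lapMatrix_mulVec hG₁] at hdelete
  rw [incVec_dotProduct]
  linarith

lemma resDist_lt_resDist_of_le (h : G₂ ≤ G₁) (hG₂ : G₂.Connected) {a b : Fin n}
    (h₁ : G₁.Adj a b) (h₂ : ¬ G₂.Adj a b) (v : Fin n) : resDist G₁ v < resDist G₂ v := by
  let q (u : Fin n) : ℝ := incVec a b ⬝ᵥ potential G₁ u v
  have hq_v : q v = 0 := by simp only [q, potential_self, dotProduct_zero]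
  have hq_ab : q a - q b = effRes G₁ a b := by
    simp only [q, ← dotProduct_sub, potential_sub_potential, effRes_eq_incVec_dotProduct_potential]
  obtain ⟨w, hwv, hqw⟩ : ∃ w ≠ v, q w ≠ 0 := by
    by_contra! hq
    have hq0 (w : Fin n) : q w = 0 := by
      rcases eq_or_ne w v with rfl | hwv
      exacts [hq_v, hq w hwv]
    linarith [effRes_pos (hG₂.mono h) h₁.ne, hq0 a, hq0 b]
  calc resDist G₁ v < ∑ u ∈ univ.erase v, (effRes G₁ u v + q u ^ 2) :=
        Finset.sum_lt_sum (fun u _ => le_add_of_nonneg_right (sq_nonneg _))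
          ⟨w, mem_erase.2 ⟨hwv, mem_univ w⟩, lt_add_of_pos_right _ (sq_pos_of_ne_zero hqw)⟩
    _ ≤ resDist G₂ v :=
        Finset.sum_le_sum fun u _ => effRes_add_sq_le_effRes_of_le h hG₂ h₁ h₂ u v

lemma resDist_pos [Nontrivial (Fin n)] (hG : G.Connected) (v : Fin n) : 0 < resDist G v := by
  obtain ⟨u, hu⟩ := exists_ne v
  exact Finset.sum_pos (fun w hw => effRes_pos hG (mem_erase.1 hw).1)
    ⟨u, mem_erase.2 ⟨hu, mem_univ u⟩⟩

lemma infoCent_lt_infoCent_of_le (h : G₂ ≤ G₁) (hG₂ : G₂.Connected) {a b : Fin n}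
    (h₁ : G₁.Adj a b) (h₂ : ¬ G₂.Adj a b) (v : Fin n) : infoCent G₂ v < infoCent G₁ v := by
  have : Nontrivial (Fin n) := ⟨a, b, h₁.ne⟩
  exact div_lt_div_of_pos_left (by exact_mod_cast v.pos) (resDist_pos (hG₂.mono h) v)
    (resDist_lt_resDist_of_le h hG₂ h₁ h₂ v)

end Resistance

theorem stmt_6_general {n : ℕ} (G : SimpleGraph (Fin n))
    (S H : Set (Sym2 (Fin n))) (hH : H ⊆ G.edgeSet) (hSH : S ⊂ H)
    (hconn : (G.deleteEdges H).Connected) (v : Fin n) :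
    infoCent (G.deleteEdges H) v < infoCent (G.deleteEdges S) v := by
  obtain ⟨e, heH, heS⟩ := Set.exists_of_ssubset hSH
  induction e using Sym2.ind with
  | _ a b =>
    have hab : G.Adj a b := hH heH
    exact infoCent_lt_infoCent_of_le (SimpleGraph.deleteEdges_anti hSH.subset) hconn
      (a := a) (b := b) (by simp [hab, heS]) (by simp [heH]) v

/-- Monotonicity of information centrality under edge removal: if `S ⊊ H ⊆ E` and
`G∖H` is connected, then `I_v(H) < I_v(S)` for every vertex `v`. -/
theorem stmt_6 {n : ℕ} (G : SimpleGraph (Fin n)) (hG : G.Connected)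
    (S H : Set (Sym2 (Fin n))) (hH : H ⊆ G.edgeSet) (hSH : S ⊂ H)
    (hconn : (G.deleteEdges H).Connected) (v : Fin n) :
    infoCent (G.deleteEdges H) v < infoCent (G.deleteEdges S) v :=
  stmt_6_general G S H hH hSH hconn v
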